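/- arXiv:2502.10751 — 2 statements merged into one kernel-verified Lean document; each statement's English description precedes it below -/
import Mathlib

section
/- Let R > 0 and let f be holomorphic on the open disc D(0,R) ⊆ ℂ, with Taylor coefficients c_j := f^{(j)}(0)/j! at 0. Suppose there exists an integer k ≥ 1 such that A_{s,k}(c) = 0 for every s ≥ 0. Then there exist polynomials P, Q ∈ ℂ[z] with Q ≠ 0, deg Q ≤ k, and (P = 0 or deg P ≤ k − 1), such that Q(z)·f(z) = P(z) for every z ∈ D(0,R); in particular f is (the restriction of) a rational function. -/
/-!
Kronecker's argument: the vanishing of all `A_{s,k}` forces the Taylor coefficients to satisfy a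
linear recurrence `∑ i, q i * c (n + i) = 0` of order `k`. This is proved by induction on `k`.
A nonzero `q` killing the first `k + 1` windows of `c` exists by dimension count. As long as
`A_{s,k-1} ≠ 0`, singularity of `H_{s,k}` pushes the relation one window further. Once some
`A_{m,k-1}` vanishes, Desnanot–Jacobi makes all later ones vanish, so the tail of `c` satisfies a
recurrence of order `k - 1`, and this recurrence propagates the relation from `m` on.
The recurrence says that `Q · ∑ c n X^n` is a polynomial `P` of degree `< k`, where `Q` is the
reversed characteristic polynomial, and evaluating the Taylor series gives `Q f = P`.
-/

/-- The Hankel matrix `H_{s,m}(c)`: the `(m+1) × (m+1)` complex matrix whose `(i,j)` entry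
is `c (s + i + j)`. Its determinant is `A_{s,m}(c)`. -/
noncomputable def hankelDet (c : ℕ → ℂ) (s m : ℕ) : ℂ :=
  (Matrix.of fun i j : Fin (m + 1) => c (s + (i : ℕ) + (j : ℕ))).det

open Finset

namespace Matrix

variable {R : Type*} [CommRing R]

theorem eq_zero_of_mulVec_eq_zero_of_last_eq_zero [NoZeroDivisors R] {ι : Type*} {n : ℕ}
    {M : Matrix ι (Fin (n + 1)) R} {r : Fin n → ι} (hdet : (M.submatrix r Fin.castSucc).det ≠ 0)
    {w : Fin (n + 1) → R} (hw : M *ᵥ w = 0) (hlast : w (Fin.last n) = 0) : w = 0 := by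
  have hinit : M.submatrix r Fin.castSucc *ᵥ (w ∘ Fin.castSucc) = 0 := by
    ext i
    simpa [mulVec, dotProduct, Fin.sum_univ_castSucc, hlast] using congrFun hw (r i)
  ext j
  induction j using Fin.lastCases with
  | last => exact hlast
  | cast j => exact congrFun (eq_zero_of_mulVec_eq_zero hdet hinit) j

theorem mulVec_adjugate_col_eq_zero {n : Type*} [Fintype n] [DecidableEq n] {M : Matrix n n R}
    (hdet : M.det = 0) (j : n) : M *ᵥ (fun i => adjugate M i j) = 0 := by
  ext i
  simpa [hdet, mulVec, dotProduct, mul_apply] using congrFun (congrFun (mul_adjugate M) i) j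

theorem adjugate_mul_adjugate_of_det_eq_zero [NoZeroDivisors R] {n : ℕ}
    {M : Matrix (Fin (n + 2)) (Fin (n + 2)) R} (hdet : M.det = 0)
    (hminor : (M.submatrix Fin.succ Fin.castSucc).det ≠ 0) :
    adjugate M 0 0 * adjugate M (Fin.last _) (Fin.last _) =
      adjugate M (Fin.last _) 0 * adjugate M 0 (Fin.last _) := by
  -- The first and last columns of `adjugate M` lie in `ker M`, which is a line.
  set x := fun i => adjugate M i 0
  set y := fun i => adjugate M i (Fin.last _)
  have hw : y (Fin.last _) • x - x (Fin.last _) • y = 0 := by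
    refine eq_zero_of_mulVec_eq_zero_of_last_eq_zero hminor ?_ ?_
    · simp [x, y, mulVec_sub, mulVec_smul, mulVec_adjugate_col_eq_zero hdet]
    · simp only [Pi.sub_apply, Pi.smul_apply, smul_eq_mul]; ring
  have := congrFun hw 0
  simp only [Pi.sub_apply, Pi.smul_apply, smul_eq_mul, Pi.zero_apply, x, y] at this
  linear_combination this

theorem mulVec_last_eq_zero_of_det_eq_zero [IsDomain R] {n : ℕ}
    {M : Matrix (Fin (n + 1)) (Fin (n + 1)) R} (hdet : M.det = 0)
    (hminor : (M.submatrix Fin.castSucc Fin.castSucc).det ≠ 0) {v : Fin (n + 1) → R}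
    (hv : ∀ i : Fin n, (M *ᵥ v) i.castSucc = 0) : (M *ᵥ v) (Fin.last n) = 0 := by
  classical
  obtain ⟨w, hw0, hw⟩ := exists_vecMul_eq_zero_iff.mpr hdet
  have hwlast : w (Fin.last n) ≠ 0 := fun hlast =>
    hw0 (eq_zero_of_mulVec_eq_zero_of_last_eq_zero (M := Mᵀ) (r := Fin.castSucc)
      (by rwa [← transpose_submatrix, det_transpose]) (by rwa [mulVec_transpose]) hlast)
  have hdot : w ⬝ᵥ (M *ᵥ v) = 0 := by rw [dotProduct_mulVec, hw, zero_dotProduct]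
  simp only [dotProduct, Fin.sum_univ_castSucc, hv, mul_zero, sum_const_zero, zero_add] at hdot
  exact (mul_eq_zero.mp hdot).resolve_left hwlast

end Matrix

def hankelMatrix (c : ℕ → ℂ) (s m : ℕ) : Matrix (Fin (m + 1)) (Fin (m + 1)) ℂ :=
  Matrix.of fun i j => c (s + i + j)

theorem hankelDet_eq_det_hankelMatrix (c : ℕ → ℂ) (s m : ℕ) :
    hankelDet c s m = (hankelMatrix c s m).det := rfl

section Hankel

variable {c : ℕ → ℂ} {s m : ℕ}

theorem hankelMatrix_submatrix {r t : Fin (m + 1) → Fin (m + 2)} (a b : ℕ)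
    (hr : ∀ i, (r i : ℕ) = i + a) (ht : ∀ j, (t j : ℕ) = j + b) :
    (hankelMatrix c s (m + 1)).submatrix r t = hankelMatrix c (s + a + b) m := by
  ext i j
  simp only [hankelMatrix, Matrix.submatrix_apply, Matrix.of_apply, hr, ht]
  congr 1
  ring

theorem hankelDet_comp_add (c : ℕ → ℂ) (t s k : ℕ) :
    hankelDet (fun n => c (t + n)) s k = hankelDet c (t + s) k := by
  simp only [hankelDet, add_assoc]

-- Desnanot–Jacobi for `H_{s,m+1}`, whose determinant vanishes.
theorem hankelDet_mul_hankelDet_eq_sq (h : hankelDet c s (m + 1) = 0)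
    (hne : hankelDet c (s + 1) m ≠ 0) :
    hankelDet c (s + 2) m * hankelDet c s m = hankelDet c (s + 1) m ^ 2 := by
  have hSC :
      (hankelMatrix c s (m + 1)).submatrix Fin.succ Fin.castSucc = hankelMatrix c (s + 1) m :=
    hankelMatrix_submatrix 1 0 (fun _ => rfl) (fun _ => rfl)
  have hCS :
      (hankelMatrix c s (m + 1)).submatrix Fin.castSucc Fin.succ = hankelMatrix c (s + 1) m :=
    hankelMatrix_submatrix 0 1 (fun _ => rfl) (fun _ => rfl)
  have hSS : (hankelMatrix c s (m + 1)).submatrix Fin.succ Fin.succ = hankelMatrix c (s + 2) m :=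
    hankelMatrix_submatrix 1 1 (fun _ => rfl) (fun _ => rfl)
  have hCC : (hankelMatrix c s (m + 1)).submatrix Fin.castSucc Fin.castSucc = hankelMatrix c s m :=
    hankelMatrix_submatrix 0 0 (fun _ => rfl) (fun _ => rfl)
  have key := Matrix.adjugate_mul_adjugate_of_det_eq_zero (M := hankelMatrix c s (m + 1)) h
    (by rwa [hSC])
  simp only [Matrix.adjugate_fin_succ_eq_det_submatrix, Fin.succAbove_zero, Fin.succAbove_last,
    hSC, hCS, hSS, hCC, Fin.val_zero, Fin.val_last, add_zero, zero_add, pow_zero, one_mul] at key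
  have hsign : ((-1 : ℂ) ^ (m + 1)) ^ 2 = 1 := by rw [← pow_mul, pow_mul', neg_one_sq, one_pow]
  simp only [hankelDet_eq_det_hankelMatrix]
  linear_combination key + ((hankelMatrix c (s + 1) m).det ^ 2 -
    (hankelMatrix c (s + 2) m).det * (hankelMatrix c s m).det) * hsign

theorem hankelDet_succ_eq_zero (h : hankelDet c s (m + 1) = 0) (h0 : hankelDet c s m = 0) :
    hankelDet c (s + 1) m = 0 := by
  by_contra hne
  have hsq := hankelDet_mul_hankelDet_eq_sq h hne
  rw [h0, mul_zero, eq_comm, sq_eq_zero_iff] at hsq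
  exact hne hsq

theorem hankelDet_eq_zero_of_le (h : ∀ s, hankelDet c s (m + 1) = 0) (h0 : hankelDet c s m = 0)
    {t : ℕ} (hst : s ≤ t) : hankelDet c t m = 0 := by
  induction t, hst using Nat.le_induction with
  | base => exact h0
  | succ t _ ih => exact hankelDet_succ_eq_zero (h t) ih

theorem sum_mul_eq_zero_succ_of_hankelDet_ne_zero {k : ℕ} (hdet : hankelDet c s (k + 1) = 0)
    (hne : hankelDet c s k ≠ 0) {q : Fin (k + 2) → ℂ}
    (hq : ∀ i ≤ k, ∑ j, q j * c (s + i + j) = 0) : ∑ j, q j * c (s + (k + 1) + j) = 0 := by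
  have hlast := Matrix.mulVec_last_eq_zero_of_det_eq_zero (M := hankelMatrix c s (k + 1)) (v := q)
    hdet (by rwa [hankelMatrix_submatrix 0 0 (fun _ => rfl) (fun _ => rfl)])
    (fun i => by simpa [Matrix.mulVec, dotProduct, hankelMatrix, mul_comm] using hq i i.is_le)
  simpa [Matrix.mulVec, dotProduct, hankelMatrix, mul_comm] using hlast

theorem sum_mul_eq_zero_of_forall_lt_hankelDet_ne_zero {k : ℕ} (h : ∀ s, hankelDet c s (k + 1) = 0)
    {q : Fin (k + 2) → ℂ} (hq : ∀ n ≤ k, ∑ j, q j * c (n + j) = 0)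
    (hm : ∀ s < m, hankelDet c s k ≠ 0) : ∀ n < m + k + 1, ∑ j, q j * c (n + j) = 0 := by
  intro n
  induction n using Nat.strong_induction_on with
  | _ n ih =>
  intro hn
  by_cases hnk : n ≤ k
  · exact hq n hnk
  obtain ⟨s, rfl⟩ : ∃ s, n = s + (k + 1) := ⟨n - (k + 1), by omega⟩
  exact sum_mul_eq_zero_succ_of_hankelDet_ne_zero (h s) (hm s (by omega))
    fun i hi => ih (s + i) (by omega) (by omega)

end Hankel

theorem exists_ne_zero_sum_mul_eq_zero {K : Type*} [Field K] (c : ℕ → K) (k : ℕ) :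
    ∃ q : Fin (k + 2) → K, q ≠ 0 ∧ ∀ n ≤ k, ∑ j, q j * c (n + j) = 0 := by
  have hdep : ¬LinearIndependent K fun (j : Fin (k + 2)) (n : Fin (k + 1)) => c (n + j) :=
    fun hli => by simpa using hli.fintype_card_le_finrank
  obtain ⟨q, hq, i, hi⟩ := Fintype.not_linearIndependent_iff.mp hdep
  refine ⟨q, fun h => hi (congrFun h i), fun n hn => ?_⟩
  simpa using congrFun hq ⟨n, Nat.lt_succ_of_le hn⟩

theorem exists_ne_zero_forall_gt_eq_zero {M : Type*} [Zero M] {k : ℕ} {p : Fin k → M}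
    (hp : p ≠ 0) : ∃ ρ, p ρ ≠ 0 ∧ ∀ i, ρ < i → p i = 0 := by
  classical
  obtain ⟨i, hi⟩ := Function.ne_iff.mp hp
  obtain ⟨ρ, hρ, hmax⟩ := (univ.filter (p · ≠ 0)).exists_max_image id ⟨i, by simpa using hi⟩
  refine ⟨ρ, by simpa using hρ, fun j hj => ?_⟩
  by_contra hpj
  exact absurd (hmax j (by simpa using hpj)) (not_le.mpr hj)

theorem eq_zero_of_linear_recurrence {R : Type*} [CommRing R] [NoZeroDivisors R] {r : ℕ → R}
    {k m : ℕ} {p : Fin (k + 1) → R} (hp : p ≠ 0) (hrec : ∀ n ≥ m, ∑ i, p i * r (n + i) = 0)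
    (hinit : ∀ n, m ≤ n → n < m + k → r n = 0) : ∀ n ≥ m, r n = 0 := by
  obtain ⟨ρ, hρ, hρtop⟩ := exists_ne_zero_forall_gt_eq_zero hp
  have hρk : (ρ : ℕ) ≤ k := Nat.lt_succ_iff.mp ρ.isLt
  intro n hn
  induction n using Nat.strong_induction_on with
  | _ n ih =>
  by_cases hnk : n < m + k
  · exact hinit n hn hnk
  have hsum := hrec (n - ρ) (by omega)
  rw [sum_eq_single ρ, Nat.sub_add_cancel (by omega)] at hsum
  · exact (mul_eq_zero.mp hsum).resolve_left hρ
  · intro i _ hi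
    rcases lt_or_gt_of_ne hi with hlt | hgt
    · rw [ih _ (by omega) (by omega), mul_zero]
    · rw [hρtop i hgt, zero_mul]
  · simp

theorem sum_mul_sum_eq_zero_of_forall_ge {R : Type*} [CommRing R] {c : ℕ → R} {k l m : ℕ}
    (q : Fin l → R) {p : Fin (k + 1) → R} (hp : ∀ n, ∑ i, p i * c (m + (n + i)) = 0) :
    ∀ n ≥ m, ∑ i, p i * ∑ j, q j * c (n + i + j) = 0 := by
  intro n hn
  simp only [mul_sum]
  rw [sum_comm]
  refine sum_eq_zero fun j _ => ?_
  calc ∑ i, p i * (q j * c (n + i + j))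
      = q j * ∑ i, p i * c (m + (n - m + j + i)) := by
        rw [mul_sum]
        refine sum_congr rfl fun i _ => ?_
        rw [show m + (n - m + j + i) = n + i + j by omega]
        ring
    _ = 0 := by rw [hp, mul_zero]

theorem exists_linear_recurrence_of_hankelDet_eq_zero :
    ∀ (k : ℕ) (c : ℕ → ℂ), (∀ s, hankelDet c s k = 0) →
      ∃ q : Fin (k + 1) → ℂ, q ≠ 0 ∧ ∀ n, ∑ i, q i * c (n + i) = 0
  | 0, c, h => ⟨1, one_ne_zero, fun n => by simpa [hankelDet] using h n⟩
  | k + 1, c, h => by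
    obtain ⟨q, hq0, hqinit⟩ := exists_ne_zero_sum_mul_eq_zero c k
    refine ⟨q, hq0, ?_⟩
    by_cases hZ : ∃ s, hankelDet c s k = 0
    · classical
      set m := Nat.find hZ
      obtain ⟨p, hp0, hp⟩ := exists_linear_recurrence_of_hankelDet_eq_zero k (fun n => c (m + n))
        fun s => by
          rw [hankelDet_comp_add]
          exact hankelDet_eq_zero_of_le h (Nat.find_spec hZ) (Nat.le_add_right m s)
      have hm := sum_mul_eq_zero_of_forall_lt_hankelDet_ne_zero h hqinit
        fun s hs => Nat.find_min hZ hs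
      intro n
      rcases lt_or_ge n (m + k + 1) with hn | hn
      · exact hm n hn
      · exact eq_zero_of_linear_recurrence (r := fun n => ∑ j, q j * c (n + j)) hp0
          (sum_mul_sum_eq_zero_of_forall_ge q hp)
          (fun n _ hn => hm n (by omega)) n (by omega)
    · push Not at hZ
      exact fun n => sum_mul_eq_zero_of_forall_lt_hankelDet_ne_zero (m := n + 1) h hqinit
        (fun s _ => hZ s) n (by omega)

theorem PowerSeries.hasSum_coeff_polynomial_mul {R : Type*} [CommRing R] [TopologicalSpace R]
    [IsTopologicalRing R] {φ : PowerSeries R} {z s : R}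
    (hφ : HasSum (fun n => coeff n φ * z ^ n) s) (p : Polynomial R) :
    HasSum (fun n => coeff n ((p : PowerSeries R) * φ) * z ^ n) (p.eval z * s) := by
  induction p using Polynomial.induction_on' with
  | add p q hp hq => simpa [add_mul] using hp.add hq
  | monomial d a =>
    rw [← Polynomial.C_mul_X_pow_eq_monomial, ← hasSum_nat_add_iff' d]
    simp only [Polynomial.coe_mul, Polynomial.coe_C, Polynomial.coe_pow, Polynomial.coe_X,
      mul_assoc, coeff_C_mul, coeff_X_pow_mul', Polynomial.eval_C_mul, Polynomial.eval_X_pow]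
    have hlow : ∑ i ∈ range d, a * ((if d ≤ i then coeff (i - d) φ else 0) * z ^ i) = 0 :=
      sum_eq_zero fun i hi => by simp [(mem_range.mp hi).not_ge]
    simp only [hlow, sub_zero, le_add_iff_nonneg_left, zero_le, if_true, Nat.add_sub_cancel]
    rw [show (fun n => a * (coeff n φ * z ^ (n + d))) = fun n => a * z ^ d * (coeff n φ * z ^ n)
      from funext fun n => by ring, ← mul_assoc]
    exact hφ.mul_left _

-- `X ^ k * χ (1 / X)` for the characteristic polynomial `χ = ∑ i, q i * X ^ i`.
open Polynomial in
noncomputable def recurrencePoly {R : Type*} [Semiring R] {k : ℕ} (q : Fin (k + 1) → R) : R[X] :=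
  ∑ i, C (q i) * X ^ (k - i)

section RecurrencePoly

open Polynomial

variable {R : Type*} [CommRing R] {k : ℕ} (q : Fin (k + 1) → R)

theorem natDegree_recurrencePoly_le : (recurrencePoly q).natDegree ≤ k :=
  natDegree_sum_le_of_forall_le _ _ fun _ _ => (natDegree_C_mul_X_pow_le _ _).trans (Nat.sub_le _ _)

theorem coeff_recurrencePoly_sub (i : Fin (k + 1)) : (recurrencePoly q).coeff (k - i) = q i := by
  rw [recurrencePoly, finsetSum_coeff, sum_eq_single i]
  · simp
  · intro j _ hji
    rw [coeff_C_mul_X_pow, if_neg]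
    omega
  · simp

theorem recurrencePoly_ne_zero {q : Fin (k + 1) → R} (hq : q ≠ 0) : recurrencePoly q ≠ 0 := by
  obtain ⟨i, hi⟩ := Function.ne_iff.mp hq
  exact fun h0 => hi (by rw [← coeff_recurrencePoly_sub q i, h0, coeff_zero, Pi.zero_apply])

theorem coeff_add_recurrencePoly_mul (φ : PowerSeries R) (n : ℕ) :
    PowerSeries.coeff (n + k) ((recurrencePoly q : PowerSeries R) * φ) =
      ∑ i, q i * PowerSeries.coeff (n + i) φ := by
  have hcoe : (recurrencePoly q : PowerSeries R) =
      ∑ i, PowerSeries.C (q i) * PowerSeries.X ^ (k - i) := by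
    rw [recurrencePoly, ← coeToPowerSeries.ringHom_apply, map_sum]
    simp
  simp only [hcoe, sum_mul, map_sum, mul_assoc, PowerSeries.coeff_C_mul,
    PowerSeries.coeff_X_pow_mul']
  refine sum_congr rfl fun i _ => ?_
  rw [if_pos (by omega), show n + k - (k - i) = n + i by omega]

end RecurrencePoly

theorem PowerSeries.natDegree_trunc_le {R : Type*} [Semiring R] (n : ℕ) (φ : PowerSeries R) :
    (trunc n φ).natDegree ≤ n - 1 :=
  Polynomial.natDegree_le_iff_coeff_eq_zero.mpr fun N hN => by rw [coeff_trunc, if_neg (by omega)]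

theorem kronecker_rationality_general (R : ℝ) (f : ℂ → ℂ)
    (hf : DifferentiableOn ℂ f (Metric.ball 0 R)) (k : ℕ)
    (h : ∀ s : ℕ,
      hankelDet (fun j => iteratedDeriv j f 0 / (Nat.factorial j : ℂ)) s k = 0) :
    ∃ P Q : Polynomial ℂ, Q ≠ 0 ∧ Q.natDegree ≤ k ∧ (P = 0 ∨ P.natDegree ≤ k - 1) ∧
      ∀ z ∈ Metric.ball (0 : ℂ) R, Q.eval z * f z = P.eval z := by
  obtain ⟨q, hq0, hrec⟩ := exists_linear_recurrence_of_hankelDet_eq_zero k _ h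
  set φ := PowerSeries.mk fun j => iteratedDeriv j f 0 / (Nat.factorial j : ℂ)
  set Q := recurrencePoly q
  have hQφ : ∀ n, k ≤ n → PowerSeries.coeff n ((Q : PowerSeries ℂ) * φ) = 0 := by
    intro n hn
    obtain ⟨n, rfl⟩ := Nat.exists_eq_add_of_le' hn
    simpa [Q, coeff_add_recurrencePoly_mul, φ] using hrec n
  refine ⟨PowerSeries.trunc k (Q * φ), Q, recurrencePoly_ne_zero hq0, natDegree_recurrencePoly_le q,
    Or.inr (PowerSeries.natDegree_trunc_le k _), fun z hz => ?_⟩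
  have htaylor : HasSum (fun n => PowerSeries.coeff n φ * z ^ n) (f z) := by
    have hcoeff : (fun n => PowerSeries.coeff n φ * z ^ n) =
        fun n => (n.factorial : ℂ)⁻¹ • (z - 0) ^ n • iteratedDeriv n f 0 :=
      funext fun n => by simp [φ, div_eq_inv_mul]; ring
    rw [hcoeff]
    exact Complex.hasSum_taylorSeries_on_ball hf hz
  refine (PowerSeries.hasSum_coeff_polynomial_mul htaylor Q).unique ?_
  rw [← Polynomial.eval₂_id, PowerSeries.eval₂_trunc_eq_sum_range]
  exact hasSum_sum_of_ne_finset_zero fun n hn => by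
    rw [hQφ n (not_lt.mp (mt mem_range.mpr hn)), zero_mul]

/-- Kronecker's criterion: let `f` be holomorphic on the disc `D(0,R)` with Taylor
coefficients `c j = f^{(j)}(0)/j!`. If all Hankel determinants `A_{s,k}(c)` vanish for
some `k ≥ 1`, then there are polynomials `P, Q` with `Q ≠ 0`, `deg Q ≤ k`,
`deg P ≤ k − 1` (or `P = 0`) and `Q(z)·f(z) = P(z)` on `D(0,R)`;
in particular `f` is rational. -/
theorem kronecker_rationality (R : ℝ) (hR : 0 < R) (f : ℂ → ℂ)
    (hf : DifferentiableOn ℂ f (Metric.ball 0 R)) (k : ℕ) (hk : 1 ≤ k)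
    (h : ∀ s : ℕ,
      hankelDet (fun j => iteratedDeriv j f 0 / (Nat.factorial j : ℂ)) s k = 0) :
    ∃ P Q : Polynomial ℂ, Q ≠ 0 ∧ Q.natDegree ≤ k ∧ (P = 0 ∨ P.natDegree ≤ k - 1) ∧
      ∀ z ∈ Metric.ball (0 : ℂ) R, Q.eval z * f z = P.eval z :=
  kronecker_rationality_general R f hf k h
end

section
/- Let D ⊆ ℂ^m be a domain, let A ⊆ D be a nonempty open set, and let B ⊆ ℂ^n be a closed ball. Set X := (A × ℂ^n) ∪ (D × B). Let f : ℂ^m × ℂ^n → ℂ be a function such that: (a) for every a ∈ A, the function w ↦ f(a,w) is holomorphic on all of ℂ^n; (b) for every b ∈ B, the function z ↦ f(z,b) is holomorphic on D; (c) for every b ∈ B there are polynomials P_b, Q_b ∈ ℂ[z_1,…,z_m] with Q_b ≠ 0 and f(z,b)·Q_b(z) = P_b(z) for all z ∈ D. Then there exist an open connected set G' with B ⊆ G' ⊆ ℂ^n, a set F ⊆ G' that is closed in G' and has empty interior, an integer k ≥ 0, and holomorphic functions a_α, b_α : G' → ℂ for each multi-index α ∈ ℕ^m with |α| ≤ k,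 such that, setting P(z,w) := ∑_{|α|≤k} a_α(w) z^α and Q(z,w) := ∑_{|α|≤k} b_α(w) z^α, one has f(z,w)·Q(z,w) = P(z,w) for every (z,w) ∈ (A × G') ∪ (D × B), and for every w ∈ B∖F the function z ↦ Q(z,w) is not identically zero. -/
/-!
For `w ∈ B`, the pairs `(Q, P)` of polynomials of degree `≤ k` with `f(·, w) Q = P` on `A` form
the kernel of a linear system (one equation per point of `A`) whose coefficients are entire in
`w`. The parameters where this kernel is nontrivial form a closed set, and by rationality these
sets cover `B` as `k` varies, so by Baire a single `k` works on a nonempty open set `U`.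
Take a nonzero minor `Δ` of maximal size of the system on `U`. Bordering it by a further column
and an arbitrary row gives minors vanishing on `U`, hence everywhere, and their Laplace expansion
along the new row is a kernel vector with entire entries, one of which is `Δ ≢ 0`.
With `G' = ℂⁿ` and `F = {Δ = 0}`, the relation `f Q = P` holds on `A × ℂⁿ` and spreads to
`D × B` by the identity theorem in `z`.
-/

open Set Filter Topology Metric Matrix

section IdentityTheorem

variable {E F : Type*} [NormedAddCommGroup E] [NormedSpace ℂ E]
  [NormedAddCommGroup F] [NormedSpace ℂ F] [CompleteSpace F] {h : E → F}

/-- Restricted to a complex line through `x₀`, this is the one-variable identity theorem. -/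
theorem DifferentiableOn.eqOn_zero_of_convex {V : Set E} (hd : DifferentiableOn ℂ h V)
    (hV : IsOpen V) (hVc : Convex ℝ V) {x₀ : E} (hx₀ : x₀ ∈ V) (h0 : h =ᶠ[𝓝 x₀] 0) :
    EqOn h 0 V := by
  intro w hw
  set L : ℂ → E := fun t => t • (w - x₀) + x₀
  have hL : Differentiable ℂ L := by fun_prop
  have hT : Convex ℝ (L ⁻¹' V) := (hVc.translate_preimage_left x₀).is_linear_preimage
    ((LinearMap.toSpanSingleton ℂ E (w - x₀)).restrictScalars ℝ).isLinear
  have hL0 : L 0 = x₀ := by simp [L]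
  have hφ : EqOn (h ∘ L) 0 (L ⁻¹' V) :=
    ((hd.comp hL.differentiableOn (mapsTo_preimage L V)).analyticOnNhd
        (hV.preimage hL.continuous)).eqOn_zero_of_preconnected_of_eventuallyEq_zero
      hT.isPreconnected (show L 0 ∈ V by rwa [hL0])
      (h0.comp_tendsto (hL.continuous.tendsto' 0 x₀ hL0))
  simpa [L] using hφ (show L 1 ∈ V by simpa [L] using hw)

theorem DifferentiableOn.eqOn_zero_of_isPreconnected {D : Set E} (hd : DifferentiableOn ℂ h D)
    (hD : IsOpen D) (hDc : IsPreconnected D) {x₀ : E} (hx₀ : x₀ ∈ D) (h0 : h =ᶠ[𝓝 x₀] 0) :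
    EqOn h 0 D := by
  have hsub : D ⊆ {x | h =ᶠ[𝓝 x] 0} := by
    refine hDc.subset_of_closure_inter_subset isOpen_setOfPred_eventually_nhds ⟨x₀, hx₀, h0⟩ ?_
    rintro x ⟨hxS, hxD⟩
    obtain ⟨δ, hδ, hball⟩ := isOpen_iff.1 hD x hxD
    obtain ⟨s, hs, hsx⟩ := mem_closure_iff.1 hxS δ hδ
    exact eventually_of_mem (ball_mem_nhds x hδ) <| (hd.mono hball).eqOn_zero_of_convex
      isOpen_ball (convex_ball x δ) (mem_ball_comm.1 hsx) hs
  exact fun x hx => (hsub hx).self_of_nhds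

theorem DifferentiableOn.eqOn_zero_of_eqOn_zero_of_isOpen {D W : Set E}
    (hd : DifferentiableOn ℂ h D) (hD : IsOpen D) (hDc : IsPreconnected D) (hW : IsOpen W)
    (hWne : W.Nonempty) (hWD : W ⊆ D) (h0 : EqOn h 0 W) : EqOn h 0 D := by
  obtain ⟨x₀, hx₀⟩ := hWne
  exact hd.eqOn_zero_of_isPreconnected hD hDc (hWD hx₀)
    (eventually_of_mem (hW.mem_nhds hx₀) h0)

theorem Differentiable.eq_zero_of_eqOn_zero_of_isOpen {W : Set E} (hd : Differentiable ℂ h)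
    (hW : IsOpen W) (hWne : W.Nonempty) (h0 : EqOn h 0 W) : h = 0 :=
  funext fun x => hd.differentiableOn.eqOn_zero_of_eqOn_zero_of_isOpen isOpen_univ
    isPreconnected_univ hW hWne (subset_univ W) h0 (mem_univ x)

theorem Differentiable.interior_setOf_eq_zero {x₁ : E} (hd : Differentiable ℂ h)
    (hx₁ : h x₁ ≠ 0) : interior {x | h x = 0} = ∅ := by
  by_contra hint
  exact hx₁ (congrFun (hd.eq_zero_of_eqOn_zero_of_isOpen isOpen_interior
    (nonempty_iff_ne_empty.2 hint) fun _ hx => (interior_subset hx).out) x₁)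

end IdentityTheorem

theorem exists_nonempty_interior_of_subset_iUnion_of_isClosed {X ι : Type*} [TopologicalSpace X]
    [BaireSpace X] [Countable ι] {V : Set X} (hV : IsOpen V) (hVne : V.Nonempty)
    {s : ι → Set X} (hs : ∀ k, IsClosed (s k)) (hcov : V ⊆ ⋃ k, s k) :
    ∃ k, (interior (s k)).Nonempty := by
  by_contra! hint
  have hmeagre : IsMeagre (⋃ k, s k) :=
    isMeagre_iUnion fun k => ((hs k).isNowhereDense_iff.2 (hint k)).isMeagre
  exact not_isMeagre_of_isOpen hV hVne (hmeagre.mono hcov)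

theorem isClosed_setOf_exists_mulVec_eq_zero {E ι κ : Type*} [TopologicalSpace E] [Fintype κ]
    {M : E → Matrix ι κ ℂ} (hM : ∀ i j, Continuous fun w => M w i j) :
    IsClosed {w | ∃ c ≠ 0, M w *ᵥ c = 0} := by
  have hsphere : {w | ∃ c ≠ 0, M w *ᵥ c = 0} =
      Prod.fst '' {p : E × sphere (0 : κ → ℂ) 1 | M p.1 *ᵥ p.2 = 0} := by
    ext w
    constructor
    · rintro ⟨c, hc, hMc⟩
      refine ⟨(w, ⟨‖c‖⁻¹ • c, ?_⟩), ?_, rfl⟩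
      · simp [norm_smul, hc]
      · simp [Matrix.mulVec_smul, hMc]
    · rintro ⟨⟨w, c, hc⟩, hMc, rfl⟩
      exact ⟨c, ne_zero_of_mem_unit_sphere ⟨c, hc⟩, hMc⟩
  rw [hsphere]
  refine isClosedMap_fst_of_compactSpace _ (isClosed_eq ?_ continuous_const)
  exact Continuous.matrix_mulVec
    (continuous_pi fun i => continuous_pi fun j => (hM i j).comp continuous_fst)
    (continuous_subtype_val.comp continuous_snd)

namespace Matrix

variable {ι κ R : Type*} [CommRing R]

theorem det_submatrix_equiv_eq_zero_of_mulVec_eq_zero [Fintype κ] [IsDomain R] {ν : Type*}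
    [Fintype ν] [DecidableEq ν] {M : Matrix ι κ R} {c : κ → R} (hc : c ≠ 0) (hMc : M *ᵥ c = 0)
    (ζ : ν → ι) (e : ν ≃ κ) : (M.submatrix ζ e).det = 0 := by
  refine exists_mulVec_eq_zero_iff.1 ⟨c ∘ e, ?_, ?_⟩
  · intro h
    exact hc (funext fun k => by simpa using congrFun h (e.symm k))
  · rw [submatrix_mulVec_equiv, Function.comp_assoc, e.self_comp_symm, Function.comp_id, hMc]
    rfl

variable [DecidableEq κ] {r : ℕ}

def cofactorVec (N : Matrix (Fin r) κ R) (γ : Fin (r + 1) → κ) : κ → R :=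
  ∑ b, Pi.single (γ b) ((-1) ^ (r + b : ℕ) * (N.submatrix id (γ ∘ b.succAbove)).det)

theorem mulVec_cofactorVec_apply [Fintype κ] (M : Matrix ι κ R) (ζ : Fin r → ι)
    (γ : Fin (r + 1) → κ) (z : ι) :
    (M *ᵥ cofactorVec (M.submatrix ζ id) γ) z = (M.submatrix (Fin.snoc ζ z) γ).det := by
  rw [det_succ_row _ (Fin.last r), cofactorVec, mulVec_sum, Finset.sum_apply]
  refine Finset.sum_congr rfl fun b _ => ?_
  simp [mulVec_single]
  ring

theorem cofactorVec_apply_last {γ : Fin (r + 1) → κ} (hγ : Function.Injective γ)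
    (N : Matrix (Fin r) κ R) :
    cofactorVec N γ (γ (Fin.last r)) = (N.submatrix id (γ ∘ Fin.castSucc)).det := by
  rw [cofactorVec, Finset.sum_apply, Finset.sum_eq_single (Fin.last r)]
  · simp [Fin.succAbove_last, ← two_mul]
  · intro b _ hb
    exact Pi.single_eq_of_ne (hγ.ne hb).symm _
  · simp

end Matrix

theorem Differentiable.matrix_det {E n : Type*} [NormedAddCommGroup E] [NormedSpace ℂ E]
    [Fintype n] [DecidableEq n] {M : E → Matrix n n ℂ}
    (hM : ∀ i j, Differentiable ℂ fun w => M w i j) :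
    Differentiable ℂ fun w => (M w).det := by
  simp only [det_apply]
  fun_prop

theorem exists_maximal_nonzero_minor {E ι κ K : Type*} [Fintype κ] [DecidableEq κ] [Field K]
    (M : E → Matrix ι κ K) {U : Set E} (hUne : U.Nonempty)
    (hU : ∀ w ∈ U, ∃ c ≠ 0, M w *ᵥ c = 0) :
    ∃ (r : ℕ) (ζ : Fin r → ι) (γ : Fin (r + 1) → κ), Function.Injective γ ∧
      (∃ w ∈ U, ((M w).submatrix ζ (γ ∘ Fin.castSucc)).det ≠ 0) ∧
      ∀ z, ∀ w ∈ U, ((M w).submatrix (Fin.snoc ζ z) γ).det = 0 := by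
  classical
  let HasMinor (s : ℕ) : Prop := ∃ (ζ : Fin s → ι) (γ : Fin s → κ), Function.Injective γ ∧
    ∃ w ∈ U, ((M w).submatrix ζ γ).det ≠ 0
  have hzero : HasMinor 0 := by
    obtain ⟨w, hw⟩ := hUne
    exact ⟨Fin.elim0, Fin.elim0, fun i => i.elim0, w, hw, by simp⟩
  have hfull : ¬ HasMinor (Fintype.card κ) := by
    rintro ⟨ζ, γ, hγ, w, hw, hdet⟩
    obtain ⟨c, hc, hMc⟩ := hU w hw
    have hbij : Function.Bijective γ :=
      (Fintype.bijective_iff_injective_and_card γ).2 ⟨hγ, by simp⟩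
    exact hdet (det_submatrix_equiv_eq_zero_of_mulVec_eq_zero hc hMc ζ (Equiv.ofBijective γ hbij))
  set r := Nat.findGreatest HasMinor (Fintype.card κ)
  have hmax : HasMinor r := Nat.findGreatest_spec (Nat.zero_le _) hzero
  have hr : r < Fintype.card κ := (Nat.findGreatest_le _).lt_of_ne fun h => hfull (h ▸ hmax)
  obtain ⟨ζ, γ, hγ, w, hw, hdet⟩ := hmax
  obtain ⟨j₀, hj₀⟩ : ∃ j₀, j₀ ∉ Set.range γ := by
    by_contra! hsurj
    have := Fintype.card_le_of_surjective γ hsurj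
    simp only [Fintype.card_fin] at this
    omega
  refine ⟨r, ζ, Fin.snoc γ j₀, Fin.snoc_injective_of_injective hγ hj₀, ⟨w, hw, by simpa⟩, ?_⟩
  intro z w' hw'
  by_contra hne
  exact Nat.findGreatest_is_greatest (Nat.lt_succ_self r) hr
    ⟨Fin.snoc ζ z, _, Fin.snoc_injective_of_injective hγ hj₀, w', hw', hne⟩

theorem exists_differentiable_mulVec_eq_zero {E ι κ : Type*} [NormedAddCommGroup E]
    [NormedSpace ℂ E] [Fintype κ] [DecidableEq κ] {M : E → Matrix ι κ ℂ}
    (hM : ∀ i j, Differentiable ℂ fun w => M w i j) {U : Set E} (hUo : IsOpen U)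
    (hUne : U.Nonempty) (hU : ∀ w ∈ U, ∃ c ≠ 0, M w *ᵥ c = 0) :
    ∃ c : E → κ → ℂ, (∀ j, Differentiable ℂ fun w => c w j) ∧ (∀ w, M w *ᵥ c w = 0) ∧
      ∃ j₀ w, c w j₀ ≠ 0 := by
  obtain ⟨r, ζ, γ, hγ, ⟨w₁, -, hw₁⟩, hvan⟩ := exists_maximal_nonzero_minor M hUne hU
  have hminor : ∀ z, ∀ w, ((M w).submatrix (Fin.snoc ζ z) γ).det = 0 := fun z =>
    congrFun ((Differentiable.matrix_det fun _ _ => hM _ _).eq_zero_of_eqOn_zero_of_isOpen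
      hUo hUne (hvan z))
  refine ⟨fun w => cofactorVec ((M w).submatrix ζ id) γ, fun j => ?_,
    fun w => funext fun z => (mulVec_cofactorVec_apply _ _ _ _).trans (hminor z w),
    γ (Fin.last r), w₁, by simpa [cofactorVec_apply_last hγ] using hw₁⟩
  simp only [cofactorVec, Finset.sum_apply]
  refine Differentiable.fun_sum fun b _ => ?_
  by_cases hb : j = γ b
  · subst hb
    simp only [Pi.single_eq_same]
    exact (Differentiable.matrix_det fun _ _ => hM _ _).const_mul _
  · simp [hb]

theorem differentiable_extend_val {E ι : Type*} [NormedAddCommGroup E] [NormedSpace ℂ E]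
    {p : ι → Prop} {g : E → Subtype p → ℂ} (hg : ∀ j, Differentiable ℂ fun w => g w j) (α : ι) :
    Differentiable ℂ fun w => Function.extend Subtype.val (g w) 0 α := by
  by_cases hα : p α
  · simpa only [Subtype.val_injective.extend_apply _ _ ⟨α, hα⟩] using hg ⟨α, hα⟩
  · have hne : ¬∃ j : Subtype p, j.1 = α := fun ⟨j, hj⟩ => hα (hj ▸ j.2)
    simp only [Function.extend_apply' _ _ _ hne, Pi.zero_apply]
    exact differentiable_const 0

abbrev MultiIndex (m k : ℕ) := {α : Fin m → Fin (k + 1) // ∑ i, (α i : ℕ) ≤ k}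

namespace MultiIndex

variable {m k : ℕ}

noncomputable def toFinsupp (α : MultiIndex m k) : Fin m →₀ ℕ :=
  Finsupp.equivFunOnFinite.symm fun i => α.1 i

@[simp] theorem toFinsupp_apply (α : MultiIndex m k) (i : Fin m) : α.toFinsupp i = α.1 i := rfl

theorem toFinsupp_injective : Function.Injective (toFinsupp (m := m) (k := k)) :=
  fun _ _ h => Subtype.ext <| funext fun i => Fin.ext <| DFunLike.congr_fun h i

theorem exists_toFinsupp_eq {d : Fin m →₀ ℕ} (hd : (d.sum fun _ e => e) ≤ k) :
    ∃ α : MultiIndex m k, α.toFinsupp = d := by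
  rw [Finsupp.sum_fintype _ _ fun _ => rfl] at hd
  have hle : ∀ i, d i ≤ ∑ j, d j := fun i => Finset.single_le_sum (by simp) (Finset.mem_univ i)
  exact ⟨⟨fun i => ⟨d i, by grind⟩, by simpa using hd⟩, by ext; simp⟩

end MultiIndex

section MonomialSum

variable {m k : ℕ}

noncomputable def monomialSum (c : MultiIndex m k → ℂ) (z : Fin m → ℂ) : ℂ :=
  ∑ α, c α * ∏ i, z i ^ (α.1 i : ℕ)

theorem differentiable_monomialSum (c : MultiIndex m k → ℂ) :
    Differentiable ℂ (monomialSum c) := by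
  unfold monomialSum
  fun_prop

theorem sum_filter_extend_eq_monomialSum (c : MultiIndex m k → ℂ) (z : Fin m → ℂ) :
    ∑ α ∈ Finset.univ.filter (fun α : Fin m → Fin (k + 1) => ∑ i, (α i : ℕ) ≤ k),
      Function.extend Subtype.val c 0 α * ∏ i, z i ^ (α i : ℕ) = monomialSum c z := by
  rw [Finset.sum_subtype (p := fun α : Fin m → Fin (k + 1) => ∑ i, (α i : ℕ) ≤ k)
    (F := inferInstance) _ (by simp), monomialSum]
  simp only [Subtype.val_injective.extend_apply]

theorem eval_eq_monomialSum {P : MvPolynomial (Fin m) ℂ} (hP : P.totalDegree ≤ k)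
    (z : Fin m → ℂ) :
    MvPolynomial.eval z P = monomialSum (fun α : MultiIndex m k => P.coeff α.toFinsupp) z := by
  classical
  have hsupp : P.support ⊆ Finset.univ.image MultiIndex.toFinsupp := fun d hd => by
    obtain ⟨α, rfl⟩ := MultiIndex.exists_toFinsupp_eq ((MvPolynomial.le_totalDegree hd).trans hP)
    exact Finset.mem_image_of_mem _ (Finset.mem_univ α)
  rw [MvPolynomial.eval_eq',
    Finset.sum_subset hsupp fun d _ hd => by simp [MvPolynomial.notMem_support_iff.1 hd],
    Finset.sum_image fun α _ β _ h => MultiIndex.toFinsupp_injective h, monomialSum]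
  simp

theorem eq_zero_of_monomialSum_eq_zero {c : MultiIndex m k → ℂ} (hc : monomialSum c = 0) :
    c = 0 := by
  classical
  set P : MvPolynomial (Fin m) ℂ := ∑ α, MvPolynomial.monomial α.toFinsupp (c α)
  have heval : ∀ z, MvPolynomial.eval z P = monomialSum c z := fun z => by
    rw [monomialSum, map_sum]
    refine Finset.sum_congr rfl fun α _ => ?_
    simp [MvPolynomial.eval_monomial, Finsupp.prod_fintype]
  have hP : P = 0 := MvPolynomial.funext fun z => by simp [heval, hc]
  funext α
  simpa [P, MvPolynomial.coeff_sum, MvPolynomial.coeff_monomial,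
    MultiIndex.toFinsupp_injective.eq_iff] using congrArg (MvPolynomial.coeff α.toFinsupp) hP

end MonomialSum

section FractionMatrix

variable {E : Type*} {m k : ℕ} {f : (Fin m → ℂ) → E → ℂ} {A : Set (Fin m → ℂ)}

/-- A kernel vector `c` is a pair of polynomials `Q = ∑ c (inl α) z^α`, `P = ∑ c (inr α) z^α`
with `f(·, w) Q = P` on `A`. -/
noncomputable def fractionMatrix (f : (Fin m → ℂ) → E → ℂ) (A : Set (Fin m → ℂ)) (k : ℕ)
    (w : E) : Matrix A (MultiIndex m k ⊕ MultiIndex m k) ℂ :=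
  Matrix.of fun z => Sum.elim (fun α => f z w * ∏ i, (z : Fin m → ℂ) i ^ (α.1 i : ℕ))
    fun α => -∏ i, (z : Fin m → ℂ) i ^ (α.1 i : ℕ)

theorem fractionMatrix_mulVec_apply (w : E) (c : MultiIndex m k ⊕ MultiIndex m k → ℂ) (z : A) :
    (fractionMatrix f A k w *ᵥ c) z =
      f z w * monomialSum (c ∘ Sum.inl) z - monomialSum (c ∘ Sum.inr) z := by
  simp only [fractionMatrix, mulVec, dotProduct, Fintype.sum_sum_type, monomialSum,
    Finset.mul_sum]
  simp [mul_comm, mul_left_comm, sub_eq_add_neg]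

theorem differentiable_fractionMatrix_apply [NormedAddCommGroup E] [NormedSpace ℂ E]
    (ha : ∀ a ∈ A, Differentiable ℂ (f a)) (z : A) (j : MultiIndex m k ⊕ MultiIndex m k) :
    Differentiable ℂ fun w => fractionMatrix f A k w z j := by
  cases j with
  | inl α => exact (ha z z.2).mul_const _
  | inr α => exact differentiable_const _

theorem exists_ne_zero_fractionMatrix_mulVec_eq_zero {w : E} {P Q : MvPolynomial (Fin m) ℂ}
    (hQ : Q ≠ 0) (hPQ : ∀ z ∈ A, f z w * MvPolynomial.eval z Q = MvPolynomial.eval z P) :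
    ∃ c ≠ 0, fractionMatrix f A (max P.totalDegree Q.totalDegree) w *ᵥ c = 0 := by
  set k := max P.totalDegree Q.totalDegree
  have hP := eval_eq_monomialSum (k := k) (le_max_left P.totalDegree Q.totalDegree)
  have hQ' := eval_eq_monomialSum (k := k) (le_max_right P.totalDegree Q.totalDegree)
  refine ⟨Sum.elim (fun α => Q.coeff α.toFinsupp) (fun α => P.coeff α.toFinsupp), ?_, ?_⟩
  · intro hc
    apply hQ
    refine MvPolynomial.funext fun z => ?_
    have hcoeff : (fun α : MultiIndex m k => Q.coeff α.toFinsupp) = 0 :=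
      funext fun α => congrFun hc (Sum.inl α)
    rw [hQ', hcoeff]
    simp [monomialSum]
  · funext z
    rw [fractionMatrix_mulVec_apply]
    simp [Function.comp_def, ← hP, ← hQ', hPQ z z.2]

theorem eq_zero_of_fractionMatrix_mulVec_eq_zero (hAo : IsOpen A) (hAne : A.Nonempty) {w : E}
    {c : MultiIndex m k ⊕ MultiIndex m k → ℂ} (hc : fractionMatrix f A k w *ᵥ c = 0)
    (hQ : monomialSum (c ∘ Sum.inl) = 0) : c = 0 := by
  have hP : monomialSum (c ∘ Sum.inr) = 0 :=
    (differentiable_monomialSum _).eq_zero_of_eqOn_zero_of_isOpen hAo hAne fun z hz => by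
      simpa [fractionMatrix_mulVec_apply, hQ] using congrFun hc ⟨z, hz⟩
  funext j
  cases j with
  | inl α => exact congrFun (eq_zero_of_monomialSum_eq_zero hQ) α
  | inr α => exact congrFun (eq_zero_of_monomialSum_eq_zero hP) α

end FractionMatrix

/-- **Theorem 2** (multivariable case, with `G = ℂ^n`): let `D ⊆ ℂ^m` be a domain,
`A ⊆ D` nonempty open, `B ⊆ ℂ^n` a closed (Euclidean) ball, and
`X := (A × ℂ^n) ∪ (D × B)`. Suppose `f(a,·)` is entire for `a ∈ A`, `f(·,b)` is
holomorphic on `D` for `b ∈ B`, and each `f(·,b)` is rational on `D`. Then there exist a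
domain `G'` with `B ⊆ G' ⊆ ℂ^n`, a relatively closed subset `F ⊆ G'` with empty interior,
and polynomials `P(z,w) = ∑_{|α|≤k} a_α(w) z^α`, `Q(z,w) = ∑_{|α|≤k} b_α(w) z^α` with
coefficients holomorphic on `G'`, such that `f·Q = P` on `(A × G') ∪ (D × B)` and
`Q(·,w)` is not identically zero for `w ∈ B∖F`. -/
theorem rational_cross_multivariable (m n : ℕ)
    (D : Set (Fin m → ℂ)) (hDo : IsOpen D) (hDc : IsConnected D)
    (A : Set (Fin m → ℂ)) (hAo : IsOpen A) (hAne : A.Nonempty) (hAD : A ⊆ D)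
    (w₀ : EuclideanSpace ℂ (Fin n)) (ρ : ℝ) (hρ : 0 < ρ)
    (B : Set (EuclideanSpace ℂ (Fin n))) (hB : B = Metric.closedBall w₀ ρ)
    (f : (Fin m → ℂ) → EuclideanSpace ℂ (Fin n) → ℂ)
    (ha : ∀ a ∈ A, Differentiable ℂ (f a))
    (hb : ∀ b ∈ B, DifferentiableOn ℂ (fun z => f z b) D)
    (hrat : ∀ b ∈ B, ∃ P Q : MvPolynomial (Fin m) ℂ, Q ≠ 0 ∧
      ∀ z ∈ D, f z b * MvPolynomial.eval z Q = MvPolynomial.eval z P) :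
    ∃ G' : Set (EuclideanSpace ℂ (Fin n)), B ⊆ G' ∧ IsOpen G' ∧ IsConnected G' ∧
    ∃ F : Set (EuclideanSpace ℂ (Fin n)), F ⊆ G' ∧
      (∃ C, IsClosed C ∧ F = G' ∩ C) ∧ interior F = ∅ ∧
    ∃ k : ℕ, ∃ a b : (Fin m → Fin (k + 1)) → EuclideanSpace ℂ (Fin n) → ℂ,
      (∀ α, DifferentiableOn ℂ (a α) G') ∧
      (∀ α, DifferentiableOn ℂ (b α) G') ∧
      (∀ z w, (z, w) ∈ (A ×ˢ G') ∪ (D ×ˢ B) →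
        f z w *
            (∑ α ∈ Finset.univ.filter (fun α : Fin m → Fin (k + 1) => ∑ i, (α i : ℕ) ≤ k),
              b α w * ∏ i, z i ^ (α i : ℕ)) =
          ∑ α ∈ Finset.univ.filter (fun α : Fin m → Fin (k + 1) => ∑ i, (α i : ℕ) ≤ k),
            a α w * ∏ i, z i ^ (α i : ℕ)) ∧
      (∀ w ∈ B \ F, ∃ z : Fin m → ℂ,
        (∑ α ∈ Finset.univ.filter (fun α : Fin m → Fin (k + 1) => ∑ i, (α i : ℕ) ≤ k),
          b α w * ∏ i, z i ^ (α i : ℕ)) ≠ 0) := by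
  have hcover : ball w₀ ρ ⊆ ⋃ k, {w | ∃ c ≠ 0, fractionMatrix f A k w *ᵥ c = 0} :=
    fun w hw => by
      obtain ⟨P, Q, hQ, hPQ⟩ := hrat w (hB ▸ ball_subset_closedBall hw)
      exact mem_iUnion.2
        ⟨_, exists_ne_zero_fractionMatrix_mulVec_eq_zero hQ fun z hz => hPQ z (hAD hz)⟩
  obtain ⟨K, hK⟩ := exists_nonempty_interior_of_subset_iUnion_of_isClosed isOpen_ball
    (nonempty_ball.2 hρ) (fun k => isClosed_setOf_exists_mulVec_eq_zero fun z j =>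
      (differentiable_fractionMatrix_apply ha z j).continuous) hcover
  obtain ⟨c, hcd, hc, j₀, w₁, hw₁⟩ := exists_differentiable_mulVec_eq_zero
    (M := fractionMatrix f A K) (differentiable_fractionMatrix_apply ha) isOpen_interior hK
    fun _ hw => (interior_subset hw).out
  set Q := fun w => monomialSum (c w ∘ Sum.inl)
  set P := fun w => monomialSum (c w ∘ Sum.inr)
  have hrelA : ∀ z ∈ A, ∀ w, f z w * Q w z = P w z := fun z hz w =>
    sub_eq_zero.1 <| by simpa [fractionMatrix_mulVec_apply] using congrFun (hc w) ⟨z, hz⟩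
  have hrelD : ∀ w ∈ B, ∀ z ∈ D, f z w * Q w z = P w z := fun w hw z hz => sub_eq_zero.1 <|
    (((hb w hw).mul (differentiable_monomialSum _).differentiableOn).sub
      (differentiable_monomialSum _).differentiableOn).eqOn_zero_of_eqOn_zero_of_isOpen hDo
      hDc.isPreconnected hAo hAne hAD (fun z hz => sub_eq_zero.2 (hrelA z hz w)) hz
  refine ⟨univ, subset_univ _, isOpen_univ, isConnected_univ, {w | c w j₀ = 0}, subset_univ _,
    ⟨_, isClosed_eq (hcd j₀).continuous continuous_const, (univ_inter _).symm⟩,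
    (hcd j₀).interior_setOf_eq_zero hw₁, K,
    fun α w => Function.extend Subtype.val (c w ∘ Sum.inr) 0 α,
    fun α w => Function.extend Subtype.val (c w ∘ Sum.inl) 0 α,
    fun α => (differentiable_extend_val (fun _ => hcd _) α).differentiableOn,
    fun α => (differentiable_extend_val (fun _ => hcd _) α).differentiableOn, ?_, ?_⟩
  · simp only [sum_filter_extend_eq_monomialSum]
    rintro z w (⟨hz, -⟩ | ⟨hz, hw⟩)
    · exact hrelA z hz w
    · exact hrelD w hw z hz
  · rintro w ⟨-, hw⟩
    by_contra! hQ
    simp only [sum_filter_extend_eq_monomialSum] at hQ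
    exact hw (congrFun
      (eq_zero_of_fractionMatrix_mulVec_eq_zero hAo hAne (hc w) (funext hQ)) j₀)
end
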